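/- Let (⟨G,m⟩, p) be a minimally rigid d-periodic orbit framework on the fixed torus, i.e. it is infinitesimally rigid and |E| = d|V| - d. Then for every subset of edges Y ⊆ E whose incident vertex set V(Y) satisfies |V(Y)| ≥ d, we have |Y| ≤ d|V(Y)| - (d+1 choose 2) + Σ_{i=1}^{k}(d - i), where k is the rank of the gain space of Y (note Σ_{i=1}^{k}(d - i) = kd - k(k+1)/2). -/

import Mathlib

open Matrix

/-- The row vector `z L ∈ ℝ^d` obtained from an integer vector `z ∈ ℤ^d` and the
lattice matrix `L`. -/
noncomputable def gainVec {d : ℕ} (L : Matrix (Fin d) (Fin d) ℝ) (z : Fin d → ℤ) :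
    Fin d → ℝ :=
  Matrix.vecMul (fun k => (z k : ℝ)) L

/-- An infinitesimal motion of the periodic orbit framework `(⟨G,m⟩,p)` on the fixed
torus with lattice matrix `L`:
`(u_{i(e)} - u_{j(e)}) · (p_{i(e)} - p_{j(e)} - m_e L) = 0` for every edge `e`. -/
def IsMotion (d : ℕ) {V E : Type*} (ie je : E → V) (m : E → Fin d → ℤ)
    (p : V → Fin d → ℝ) (L : Matrix (Fin d) (Fin d) ℝ) (u : V → Fin d → ℝ) : Prop :=
  ∀ e : E, (fun k => u (ie e) k - u (je e) k) ⬝ᵥ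
      (fun k => p (ie e) k - p (je e) k - gainVec L (m e) k) = 0

/-- `IsWalk ie je a w b` : the list `w` of edges, each traversed forwards (`true`) or
backwards (`false`), forms a walk in the multigraph from vertex `a` to vertex `b`. -/
def IsWalk {V E : Type*} (ie je : E → V) : V → List (E × Bool) → V → Prop
  | a, [], b => a = b
  | a, ed :: rest, b =>
      a = (if ed.2 then ie ed.1 else je ed.1) ∧
        IsWalk ie je (if ed.2 then je ed.1 else ie ed.1) rest b

/-- The net gain of a walk: `+m_e` for forwards-traversed edges and `-m_e` for
backwards-traversed edges. -/
def netGain {d : ℕ} {E : Type*} (m : E → Fin d → ℤ) (w : List (E × Bool)) : Fin d → ℤ :=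
  (w.map fun ed => if ed.2 then m ed.1 else -m ed.1).sum

/-- The gain space of the subgraph spanned by a set `Y` of edges: the `ℤ`-submodule of
`ℤ^d` generated by the net gains of the closed walks using only edges of `Y`. -/
def gainSpaceOf (d : ℕ) {V E : Type*} (ie je : E → V) (m : E → Fin d → ℤ)
    (Y : Set E) : Submodule ℤ (Fin d → ℤ) :=
  Submodule.span ℤ
    {g | ∃ (v : V) (w : List (E × Bool)),
      IsWalk ie je v w v ∧ (∀ ed ∈ w, ed.1 ∈ Y) ∧ netGain m w = g}

/-!
Since the framework is infinitesimally rigid with `|E| = d|V| - d`, its rigidity matrix has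
independent rows, so the rows of any edge set `Y` are independent too and
`|Y| = d|V(Y)| - dim M`, where `M` is the space of infinitesimal motions of the subframework on
`Y`. Walks in `Y` from a root of each connected component give a gain potential `γ` with
`γ(i e) + m e - γ(j e)` in the gain space for every `e ∈ Y`; with `q = p + γL` the edge vectors of
`Y` become `q(i e) - q(j e) - h e`, where the `h e` span a space `G` of dimension `k' ≤ k`.
Let `K` be the span of the vectors `q v - q v₀` and `h e`. Infinitesimal rotations in
`Gᗮ ⊓ K`, translations in `K`, and arbitrary displacements orthogonal to `K` at each vertex are
independent motions; as `|V(Y)| ≥ d` they number at least `d + (d - k').choose 2`, which gives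
the bound.
-/

open Module Submodule
open scoped RealInnerProductSpace

theorem Nat.choose_two_add_add_le {a r s : ℕ} (h : a + r ≤ s) :
    (a + r).choose 2 + r ≤ a.choose 2 + s * r := by
  induction r with
  | zero => simp
  | succ r ih =>
    have hsucc : (a + (r + 1)).choose 2 = (a + r).choose 2 + (a + r) := by
      rw [← Nat.add_assoc, Nat.choose_succ_succ', Nat.choose_one_right, Nat.add_comm]
    have ih' := ih (by omega)
    rw [hsucc, Nat.mul_succ]
    omega

theorem sum_Icc_sub_add_choose_two {d k : ℕ} (hk : k ≤ d) :
    ∑ i ∈ Finset.Icc 1 k, ((d : ℤ) - i) + ((d - k).choose 2 : ℕ) = d.choose 2 := by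
  induction k with
  | zero => simp
  | succ k ih =>
    have hsucc : (d - k).choose 2 = (d - (k + 1)).choose 2 + (d - (k + 1)) := by
      rw [show d - k = d - (k + 1) + 1 by omega, Nat.choose_succ_succ', Nat.choose_one_right,
        Nat.add_comm]
    rw [Finset.sum_Icc_succ_top (by omega), ← ih (by omega), hsucc]
    push_cast [Nat.cast_sub hk]
    ring

theorem le_mul_sub_choose_add_sum_Icc {d k k' y s : ℕ} (hk : k ≤ d) (hk' : k' ≤ k)
    (h : y + d + (d - k').choose 2 ≤ s * d) :
    (y : ℤ) ≤ d * s - (d + 1).choose 2 + ∑ i ∈ Finset.Icc 1 k, ((d : ℤ) - i) := by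
  have hchoose : (d - k).choose 2 ≤ (d - k').choose 2 := Nat.choose_le_choose 2 (by omega)
  have hsum := sum_Icc_sub_add_choose_two hk
  have hd : ((d + 1).choose 2 : ℤ) = d + d.choose 2 := by
    rw [Nat.choose_succ_succ', Nat.choose_one_right]
    push_cast
    ring
  rw [hd, Nat.mul_comm] at *
  omega

section RigidityMap

variable {S Y H : Type*} [NormedAddCommGroup H] [InnerProductSpace ℝ H]

noncomputable def rigidityMap (iY jY : Y → S) (x : Y → H) : (S → H) →ₗ[ℝ] (Y → ℝ) :=
  LinearMap.pi fun e => innerₗ H (x e) ∘ₗ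
    (LinearMap.proj (R := ℝ) (φ := fun _ : S => H) (iY e) - LinearMap.proj (jY e))

@[simp]
theorem rigidityMap_apply (iY jY : Y → S) (x : Y → H) (u : S → H) (e : Y) :
    rigidityMap iY jY x u e = ⟪x e, u (iY e) - u (jY e)⟫ :=
  rfl

theorem finrank_range_add_finrank_ker_rigidityMap [Fintype S] [FiniteDimensional ℝ H]
    (iY jY : Y → S) (x : Y → H) :
    finrank ℝ (LinearMap.range (rigidityMap iY jY x)) +
        finrank ℝ (LinearMap.ker (rigidityMap iY jY x)) = Fintype.card S * finrank ℝ H := by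
  rw [LinearMap.finrank_range_add_finrank_ker, Module.finrank_pi_fintype, Finset.sum_const,
    Finset.card_univ, smul_eq_mul]

theorem surjective_rigidityMap_of_ker_const [Fintype S] [Fintype Y] [FiniteDimensional ℝ H]
    {iY jY : Y → S} {x : Y → H}
    (hrigid : ∀ u ∈ LinearMap.ker (rigidityMap iY jY x), ∀ v w, u v = u w)
    (hcount : Fintype.card Y + finrank ℝ H ≤ Fintype.card S * finrank ℝ H) :
    Function.Surjective (rigidityMap iY jY x) := by
  have hker : finrank ℝ (LinearMap.ker (rigidityMap iY jY x)) ≤ finrank ℝ H := by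
    have hconst : LinearMap.ker (rigidityMap iY jY x) ≤
        LinearMap.range (LinearMap.pi fun _ : S => (LinearMap.id : H →ₗ[ℝ] H)) := by
      intro u hu
      rcases isEmpty_or_nonempty S with hS | ⟨⟨v⟩⟩
      · exact ⟨0, funext hS.elim⟩
      · exact ⟨u v, funext fun w => hrigid u hu v w⟩
    exact (Submodule.finrank_mono hconst).trans (LinearMap.finrank_range_le _)
  have hrn := finrank_range_add_finrank_ker_rigidityMap iY jY x
  have hrange := Submodule.finrank_le (LinearMap.range (rigidityMap iY jY x))
  rw [Module.finrank_fintype_fun_eq_card] at hrange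
  rw [← LinearMap.range_eq_top]
  apply Submodule.eq_top_of_finrank_eq
  rw [Module.finrank_fintype_fun_eq_card]
  omega

theorem surjective_rigidityMap_restrict {S' Y' : Type*} {iY jY : Y → S} {x : Y → H}
    (hsurj : Function.Surjective (rigidityMap iY jY x)) {σ : Y' → Y} (hσ : σ.Injective)
    (τ : S' → S) {iY' jY' : Y' → S'} (hi : ∀ e, τ (iY' e) = iY (σ e))
    (hj : ∀ e, τ (jY' e) = jY (σ e)) :
    Function.Surjective (rigidityMap iY' jY' (x ∘ σ)) := by
  intro b
  obtain ⟨u, hu⟩ := hsurj (Function.extend σ b 0)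
  refine ⟨u ∘ τ, funext fun e => ?_⟩
  simpa [hi, hj, hσ.extend_apply] using congrFun hu (σ e)

end RigidityMap

section SkewMap

variable {H : Type*} [NormedAddCommGroup H] [InnerProductSpace ℝ H] {n : ℕ}

abbrev IncreasingPairs (n : ℕ) : Type := {p : Fin n × Fin n // p.1 < p.2}

theorem card_increasingPairs (n : ℕ) : Fintype.card (IncreasingPairs n) = n.choose 2 := by
  rw [Fintype.card_subtype, Fintype.card_product_filter_lt, Fintype.card_fin]

/-- For orthonormal `b`, `skewMap b` parametrises the infinitesimal rotations of `span ℝ (range b)`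
by their coefficients `⟪b j, A (b i)⟫`, `i < j`. -/
noncomputable def skewMap (b : Fin n → H) : (IncreasingPairs n → ℝ) →ₗ[ℝ] H →ₗ[ℝ] H :=
  Fintype.linearCombination ℝ fun p =>
    (innerₗ H (b p.1.1)).smulRight (b p.1.2) - (innerₗ H (b p.1.2)).smulRight (b p.1.1)

theorem skewMap_apply (b : Fin n → H) (c : IncreasingPairs n → ℝ) (x : H) :
    skewMap b c x = ∑ p, c p • (⟪b p.1.1, x⟫ • b p.1.2 - ⟪b p.1.2, x⟫ • b p.1.1) := by
  simp [skewMap, Fintype.linearCombination_apply, LinearMap.sum_apply]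

theorem inner_skewMap_self (b : Fin n → H) (c : IncreasingPairs n → ℝ) (x : H) :
    ⟪x, skewMap b c x⟫ = 0 := by
  simp only [skewMap_apply, inner_sum, inner_smul_right, inner_sub_right, real_inner_comm x]
  exact Finset.sum_eq_zero fun p _ => by ring

theorem skewMap_eq_zero_of_forall_inner_eq_zero {b : Fin n → H} {x : H}
    (hx : ∀ i, ⟪b i, x⟫ = 0) (c : IncreasingPairs n → ℝ) : skewMap b c x = 0 := by
  simp [skewMap_apply, hx]

theorem skewMap_mem {b : Fin n → H} {K : Submodule ℝ H} (hb : ∀ i, b i ∈ K)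
    (c : IncreasingPairs n → ℝ) (x : H) : skewMap b c x ∈ K := by
  rw [skewMap_apply]
  exact K.sum_mem fun p _ =>
    K.smul_mem _ (K.sub_mem (K.smul_mem _ (hb _)) (K.smul_mem _ (hb _)))

theorem inner_skewMap_orthonormal {b : Fin n → H} (hb : Orthonormal ℝ b)
    (c : IncreasingPairs n → ℝ) (p : IncreasingPairs n) :
    ⟪b p.1.2, skewMap b c (b p.1.1)⟫ = c p := by
  classical
  have hbb := orthonormal_iff_ite.mp hb
  rw [skewMap_apply, inner_sum, Finset.sum_eq_single p]
  · simp [inner_smul_right, hbb, p.2.ne', hb.1]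
  · intro q _ hq
    have hsame : ¬(q.1.1 = p.1.1 ∧ p.1.2 = q.1.2) := fun h =>
      hq (Subtype.ext (Prod.ext h.1 h.2.symm))
    have hswap : ¬(q.1.2 = p.1.1 ∧ p.1.2 = q.1.1) := fun h =>
      (q.2.trans (h.2 ▸ h.1 ▸ p.2)).false
    simp only [inner_smul_right, inner_sub_right, hbb]
    grind
  · simp

end SkewMap

section MotionFamily

variable {S Y H : Type*} [NormedAddCommGroup H] [InnerProductSpace ℝ H] {n : ℕ}

noncomputable def motionFamily (b : Fin n → H) (K : Submodule ℝ H) (q : S → H) (v₀ : S) :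
    (IncreasingPairs n → ℝ) × K × (S → Kᗮ) →ₗ[ℝ] (S → H) where
  toFun z v := skewMap b z.1 (q v - q v₀) + z.2.1 + z.2.2 v
  map_add' z z' := by
    funext v
    simp only [Prod.fst_add, Prod.snd_add, map_add, LinearMap.add_apply, Pi.add_apply,
      Submodule.coe_add]
    abel
  map_smul' r z := by
    funext v
    simp [smul_add]

theorem motionFamily_apply (b : Fin n → H) (K : Submodule ℝ H) (q : S → H) (v₀ : S)
    (z : (IncreasingPairs n → ℝ) × K × (S → Kᗮ)) (v : S) :
    motionFamily b K q v₀ z v = skewMap b z.1 (q v - q v₀) + z.2.1 + z.2.2 v :=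
  rfl

theorem range_motionFamily_le_ker {b : Fin n → H} {K : Submodule ℝ H} {q : S → H} {v₀ : S}
    {iY jY : Y → S} {h : Y → H} (hbh : ∀ i e, ⟪b i, h e⟫ = 0) (hqK : ∀ v, q v - q v₀ ∈ K)
    (hhK : ∀ e, h e ∈ K) :
    LinearMap.range (motionFamily b K q v₀) ≤
      LinearMap.ker (rigidityMap iY jY fun e => q (iY e) - q (jY e) - h e) := by
  rintro _ ⟨⟨c, t, s⟩, rfl⟩
  refine LinearMap.mem_ker.mpr (funext fun e => ?_)
  have hx : q (iY e) - q (jY e) - h e ∈ K := by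
    rw [show q (iY e) - q (jY e) - h e = (q (iY e) - q v₀) - (q (jY e) - q v₀) - h e by abel]
    exact K.sub_mem (K.sub_mem (hqK _) (hqK _)) (hhK e)
  have hdiff : motionFamily b K q v₀ (c, t, s) (iY e) - motionFamily b K q v₀ (c, t, s) (jY e) =
      skewMap b c (q (iY e) - q (jY e) - h e) + ((s (iY e) : H) - s (jY e)) := by
    have hA : skewMap b c (q (iY e) - q (jY e) - h e) =
        skewMap b c (q (iY e) - q v₀) - skewMap b c (q (jY e) - q v₀) := by
      rw [map_sub, skewMap_eq_zero_of_forall_inner_eq_zero (fun i => hbh i e), sub_zero,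
        ← map_sub, sub_sub_sub_cancel_right]
    rw [hA, motionFamily_apply, motionFamily_apply]
    abel
  rw [rigidityMap_apply, hdiff, inner_add_right, inner_skewMap_self,
    inner_right_of_mem_orthogonal hx (Kᗮ.sub_mem (s (iY e)).2 (s (jY e)).2), add_zero]
  rfl

theorem injective_motionFamily {b : Fin n → H} (hb : Orthonormal ℝ b) {K : Submodule ℝ H}
    (hbK : ∀ i, b i ∈ K) {q : S → H} {v₀ : S} {h : Y → H} (hbh : ∀ i e, ⟪b i, h e⟫ = 0)
    (hK : K ≤ span ℝ (Set.range (fun v => q v - q v₀) ∪ Set.range h)) :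
    Function.Injective (motionFamily b K q v₀) := by
  refine (injective_iff_map_eq_zero _).mpr fun ⟨c, t, s⟩ hz => ?_
  have hsplit : ∀ v, skewMap b c (q v - q v₀) + t = 0 ∧ s v = 0 := by
    intro v
    have hv : (skewMap b c (q v - q v₀) + t) + (s v : H) = 0 := congrFun hz v
    have ha : skewMap b c (q v - q v₀) + t = 0 :=
      Submodule.disjoint_def'.mp K.orthogonal_disjoint _ (K.add_mem (skewMap_mem hbK c _) t.2)
        _ (neg_mem (s v).2) (eq_neg_of_add_eq_zero_left hv)
    exact ⟨ha, by rwa [ha, zero_add, ZeroMemClass.coe_eq_zero] at hv⟩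
  have ht : t = 0 := by simpa using (hsplit v₀).1
  have hker : K ≤ LinearMap.ker (skewMap b c) := by
    refine hK.trans (span_le.mpr ?_)
    rintro _ (⟨v, rfl⟩ | ⟨e, rfl⟩)
    · simpa [ht] using (hsplit v).1
    · exact skewMap_eq_zero_of_forall_inner_eq_zero (fun i => hbh i e) c
  have hc : c = 0 := funext fun p => by
    rw [← inner_skewMap_orthonormal hb c p, LinearMap.mem_ker.mp (hker (hbK _)), inner_zero_right]
    rfl
  rw [hc, ht, funext fun v => (hsplit v).2]
  rfl

end MotionFamily

section Core

variable {S Y H : Type*} [NormedAddCommGroup H] [InnerProductSpace ℝ H]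

theorem finrank_add_choose_two_le_finrank_ker_rigidityMap [Fintype S] [FiniteDimensional ℝ H]
    (iY jY : Y → S) (q : S → H) (h : Y → H) (hS : finrank ℝ H ≤ Fintype.card S) :
    finrank ℝ H + (finrank ℝ H - finrank ℝ (span ℝ (Set.range h))).choose 2 ≤
      finrank ℝ (LinearMap.ker (rigidityMap iY jY fun e => q (iY e) - q (jY e) - h e)) := by
  rcases isEmpty_or_nonempty S with hSe | ⟨⟨v₀⟩⟩
  · simp_all
  set G := span ℝ (Set.range h)
  set K := span ℝ (Set.range (fun v => q v - q v₀) ∪ Set.range h)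
  have hGK : G ≤ K := span_mono Set.subset_union_right
  set P : Submodule ℝ H := Gᗮ ⊓ K
  let b : Fin (finrank ℝ P) → H := fun i => stdOrthonormalBasis ℝ P i
  have hb : Orthonormal ℝ b :=
    (stdOrthonormalBasis ℝ P).orthonormal.comp_linearIsometry P.subtypeₗᵢ
  have hbh : ∀ i e, ⟪b i, h e⟫ = 0 := fun i e =>
    inner_left_of_mem_orthogonal (subset_span (Set.mem_range_self e))
      (stdOrthonormalBasis ℝ P i).2.1
  have hbK : ∀ i, b i ∈ K := fun i => (stdOrthonormalBasis ℝ P i).2.2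
  have hle := LinearMap.finrank_range_of_inj (injective_motionFamily hb hbK hbh le_rfl) ▸
    Submodule.finrank_mono (range_motionFamily_le_ker (iY := iY) (jY := jY) hbh
      (fun v => subset_span (Set.mem_union_left _ (Set.mem_range_self v)))
      (fun e => subset_span (Set.mem_union_right _ (Set.mem_range_self e))))
  rw [Module.finrank_prod, Module.finrank_prod, Module.finrank_fintype_fun_eq_card,
    card_increasingPairs, Module.finrank_pi_fintype, Finset.sum_const, Finset.card_univ,
    smul_eq_mul] at hle
  have hGP : finrank ℝ G + finrank ℝ P = finrank ℝ K :=
    Submodule.finrank_add_inf_finrank_orthogonal hGK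
  have hKK := K.finrank_add_finrank_orthogonal
  have harith := Nat.choose_two_add_add_le (a := finrank ℝ P) (r := finrank ℝ Kᗮ)
    (s := Fintype.card S) (by omega)
  rw [show finrank ℝ H - finrank ℝ G = finrank ℝ P + finrank ℝ Kᗮ by omega]
  omega

theorem card_add_choose_two_le_of_surjective_rigidityMap [Fintype S] [Fintype Y]
    [FiniteDimensional ℝ H] {iY jY : Y → S} {q : S → H} {h : Y → H}
    (hsurj : Function.Surjective (rigidityMap iY jY fun e => q (iY e) - q (jY e) - h e))
    (hS : finrank ℝ H ≤ Fintype.card S) :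
    Fintype.card Y + finrank ℝ H + (finrank ℝ H - finrank ℝ (span ℝ (Set.range h))).choose 2 ≤
      Fintype.card S * finrank ℝ H := by
  have hrn := finrank_range_add_finrank_ker_rigidityMap iY jY fun e => q (iY e) - q (jY e) - h e
  rw [LinearMap.range_eq_top.mpr hsurj, finrank_top, Module.finrank_fintype_fun_eq_card] at hrn
  have hker := finrank_add_choose_two_le_finrank_ker_rigidityMap iY jY q h hS
  omega

end Core

theorem finrank_span_image_le_finrank {R K M W : Type*} [Ring R] [StrongRankCondition R]
    [DivisionRing K] [AddCommGroup M] [Module R M] [AddCommGroup W] [Module K W] [Module R W]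
    [SMul R K] [IsScalarTower R K W] (F : M →ₗ[R] W) (Γ : Submodule R M) [Module.Free R Γ]
    [Module.Finite R Γ] :
    finrank K (span K (F '' Γ)) ≤ finrank R Γ := by
  let B := Module.Free.chooseBasis R Γ
  have himage : F '' Γ ⊆ span K (Set.range (F ∘ Γ.subtype ∘ B)) := by
    rintro _ ⟨x, hx, rfl⟩
    refine span_le_restrictScalars R K _ ?_
    rw [Set.range_comp, ← Submodule.map_span, Set.range_comp, ← Submodule.map_span, B.span_eq]
    exact ⟨x, ⟨⟨x, hx⟩, trivial, rfl⟩, rfl⟩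
  have := FiniteDimensional.span_of_finite K (Set.finite_range (F ∘ Γ.subtype ∘ B))
  calc finrank K (span K (F '' Γ)) ≤ finrank K (span K (Set.range (F ∘ Γ.subtype ∘ B))) :=
        Submodule.finrank_mono (span_le.mpr himage)
    _ ≤ Fintype.card (Module.Free.ChooseBasisIndex R Γ) := finrank_range_le_card _
    _ = finrank R Γ := (Module.finrank_eq_card_chooseBasisIndex R Γ).symm

section Walks

variable {V E : Type*} {ie je : E → V}

def reverseWalk (w : List (E × Bool)) : List (E × Bool) :=
  (w.map fun ed => (ed.1, !ed.2)).reverse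

theorem mem_reverseWalk {w : List (E × Bool)} {ed : E × Bool} :
    ed ∈ reverseWalk w ↔ (ed.1, !ed.2) ∈ w := by
  simp only [reverseWalk, List.mem_reverse, List.mem_map]
  constructor
  · rintro ⟨a, ha, rfl⟩
    simpa using ha
  · exact fun h => ⟨_, h, by simp⟩

theorem IsWalk.append {a b c : V} {w w' : List (E × Bool)} (h : IsWalk ie je a w b)
    (h' : IsWalk ie je b w' c) : IsWalk ie je a (w ++ w') c := by
  induction w generalizing a with
  | nil => cases h; exact h'
  | cons ed rest ih => exact ⟨h.1, ih h.2⟩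

theorem IsWalk.reverse {a b : V} {w : List (E × Bool)} (h : IsWalk ie je a w b) :
    IsWalk ie je b (reverseWalk w) a := by
  induction w generalizing a with
  | nil => cases h; rfl
  | cons ed rest ih =>
    obtain ⟨ha, hrest⟩ := h
    have hlast : IsWalk ie je (if ed.2 then je ed.1 else ie ed.1) [(ed.1, !ed.2)] a := by
      cases hb : ed.2 <;> simp [IsWalk, hb, ha]
    simpa [reverseWalk] using (ih hrest).append hlast

theorem netGain_append {d : ℕ} (m : E → Fin d → ℤ) (w w' : List (E × Bool)) :
    netGain m (w ++ w') = netGain m w + netGain m w' := by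
  simp [netGain]

theorem netGain_reverseWalk {d : ℕ} (m : E → Fin d → ℤ) (w : List (E × Bool)) :
    netGain m (reverseWalk w) = -netGain m w := by
  induction w with
  | nil => simp [reverseWalk, netGain]
  | cons ed rest ih =>
    rw [reverseWalk, List.map_cons, List.reverse_cons, ← reverseWalk, netGain_append, ih]
    obtain ⟨e, b⟩ := ed
    cases b <;> simp [netGain, add_comm]

def walkSetoid (ie je : E → V) (Y : Set E) : Setoid V where
  r a b := ∃ w, IsWalk ie je a w b ∧ ∀ ed ∈ w, ed.1 ∈ Y
  iseqv := {
    refl := fun _ => ⟨[], rfl, by simp⟩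
    symm := fun ⟨w, hw, hY⟩ =>
      ⟨reverseWalk w, hw.reverse, fun ed hed => hY (ed.1, !ed.2) (mem_reverseWalk.mp hed)⟩
    trans := fun ⟨w, hw, hY⟩ ⟨w', hw', hY'⟩ =>
      ⟨w ++ w', hw.append hw', fun ed hed => (List.mem_append.mp hed).elim (hY ed) (hY' ed)⟩ }

/-- `γ v` is the net gain of a `Y`-walk to `v` from a fixed representative of its component. -/
theorem exists_gain_potential {d : ℕ} (ie je : E → V) (m : E → Fin d → ℤ) (Y : Set E) :
    ∃ γ : V → Fin d → ℤ, ∀ e ∈ Y, γ (ie e) + m e - γ (je e) ∈ gainSpaceOf d ie je m Y := by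
  let s := walkSetoid ie je Y
  have hrep : ∀ v, ∃ w, IsWalk ie je (Quotient.mk s v).out w v ∧ ∀ ed ∈ w, ed.1 ∈ Y :=
    fun v => Quotient.mk_out (s := s) v
  choose w hw hwY using hrep
  refine ⟨fun v => netGain m (w v), fun e he => subset_span ?_⟩
  have hedge : IsWalk ie je (ie e) [(e, true)] (je e) := by simp [IsWalk]
  have hsame : (Quotient.mk s (je e)).out = (Quotient.mk s (ie e)).out :=
    congrArg Quotient.out (Quotient.sound (s := s) ⟨[(e, true)], hedge, by simpa using he⟩).symm
  refine ⟨(Quotient.mk s (ie e)).out, w (ie e) ++ [(e, true)] ++ reverseWalk (w (je e)),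
    ((hw _).append hedge).append (hsame ▸ (hw _).reverse), fun ed hed => ?_, ?_⟩
  · simp only [List.mem_append, List.mem_singleton] at hed
    rcases hed with (h | rfl) | h
    exacts [hwY _ _ h, he, hwY _ (ed.1, !ed.2) (mem_reverseWalk.mp h)]
  · rw [netGain_append, netGain_append, netGain_reverseWalk]
    simp [netGain, sub_eq_add_neg]

end Walks

section PeriodicFramework

variable {d : ℕ} {V E : Type*}

noncomputable def gainVecLinear (L : Matrix (Fin d) (Fin d) ℝ) :
    (Fin d → ℤ) →ₗ[ℤ] EuclideanSpace ℝ (Fin d) :=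
  ((WithLp.addEquiv 2 (Fin d → ℝ)).symm.toAddMonoidHom.comp
    (L.vecMulLinear.toAddMonoidHom.comp ((Int.castAddHom ℝ).compLeft (Fin d)))).toIntLinearMap

theorem gainVecLinear_apply (L : Matrix (Fin d) (Fin d) ℝ) (z : Fin d → ℤ) :
    gainVecLinear L z = WithLp.toLp 2 (gainVec L z) :=
  rfl

noncomputable def edgeVector (ie je : E → V) (m : E → Fin d → ℤ) (p : V → Fin d → ℝ)
    (L : Matrix (Fin d) (Fin d) ℝ) (e : E) : EuclideanSpace ℝ (Fin d) :=
  WithLp.toLp 2 (p (ie e) - p (je e) - gainVec L (m e))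

theorem isMotion_iff_rigidityMap_eq_zero (ie je : E → V) (m : E → Fin d → ℤ)
    (p : V → Fin d → ℝ) (L : Matrix (Fin d) (Fin d) ℝ) (u : V → EuclideanSpace ℝ (Fin d)) :
    IsMotion d ie je m p L (fun v => (u v).ofLp) ↔
      rigidityMap ie je (edgeVector ie je m p L) u = 0 := by
  simp only [funext_iff, rigidityMap_apply, EuclideanSpace.inner_eq_star_dotProduct, IsMotion]
  rfl

theorem surjective_rigidityMap_edgeVector [Fintype V] [Fintype E] {ie je : E → V}
    {m : E → Fin d → ℤ} {p : V → Fin d → ℝ} {L : Matrix (Fin d) (Fin d) ℝ}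
    (hrigid : ∀ u, IsMotion d ie je m p L u → ∀ v w, u v = u w)
    (hcount : Fintype.card E + d ≤ Fintype.card V * d) :
    Function.Surjective (rigidityMap ie je (edgeVector ie je m p L)) :=
  surjective_rigidityMap_of_ker_const
    (fun u hu v w => WithLp.ofLp_injective 2
      (hrigid _ ((isMotion_iff_rigidityMap_eq_zero ie je m p L u).mpr hu) v w))
    (by rwa [finrank_euclideanSpace_fin])

theorem edgeVector_eq_switch (ie je : E → V) (m : E → Fin d → ℤ) (p : V → Fin d → ℝ)
    (L : Matrix (Fin d) (Fin d) ℝ) (γ : V → Fin d → ℤ) (e : E) :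
    edgeVector ie je m p L e =
      (WithLp.toLp 2 (p (ie e)) + gainVecLinear L (γ (ie e))) -
        (WithLp.toLp 2 (p (je e)) + gainVecLinear L (γ (je e))) -
          gainVecLinear L (γ (ie e) + m e - γ (je e)) := by
  simp only [edgeVector, map_add, map_sub, gainVecLinear_apply, WithLp.toLp_sub]
  abel

end PeriodicFramework

theorem minimally_rigid_intermediate_count_general (d : ℕ)
    (V E : Type*) [Fintype V] [Fintype E] [DecidableEq V]
    (ie je : E → V) (m : E → Fin d → ℤ) (p : V → Fin d → ℝ)
    (L : Matrix (Fin d) (Fin d) ℝ)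
    (hrigid : ∀ u : V → Fin d → ℝ, IsMotion d ie je m p L u → ∀ v w : V, u v = u w)
    (hcount : Fintype.card E = d * Fintype.card V - d) :
    ∀ Y : Finset E, d ≤ (Y.image ie ∪ Y.image je).card →
      (Y.card : ℤ) ≤ d * ((Y.image ie ∪ Y.image je).card : ℤ) - (d + 1).choose 2 +
        ∑ i ∈ Finset.Icc 1 (Module.finrank ℤ (gainSpaceOf d ie je m (↑Y : Set E))),
          ((d : ℤ) - (i : ℤ)) := by
  intro Y hY
  set S := Y.image ie ∪ Y.image je
  obtain ⟨γ, hγ⟩ := exists_gain_potential ie je m (Y : Set E)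
  let iS : Y → S := fun e => ⟨ie e, Finset.mem_union_left _ (Finset.mem_image_of_mem ie e.2)⟩
  let jS : Y → S := fun e => ⟨je e, Finset.mem_union_right _ (Finset.mem_image_of_mem je e.2)⟩
  let q : S → EuclideanSpace ℝ (Fin d) := fun v => WithLp.toLp 2 (p v) + gainVecLinear L (γ v)
  let h : Y → EuclideanSpace ℝ (Fin d) := fun e => gainVecLinear L (γ (ie e) + m e - γ (je e))
  have hdV : d ≤ d * Fintype.card V :=
    (Nat.le_mul_self d).trans (Nat.mul_le_mul_left d (hY.trans (Finset.card_le_univ S)))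
  have hsurj := surjective_rigidityMap_edgeVector hrigid
    (by rw [hcount, Nat.sub_add_cancel hdV, Nat.mul_comm])
  have hsurjY := surjective_rigidityMap_restrict hsurj Subtype.val_injective Subtype.val
    (iY' := iS) (jY' := jS) (fun _ => rfl) (fun _ => rfl)
  rw [show edgeVector ie je m p L ∘ Subtype.val = fun e => q (iS e) - q (jS e) - h e from
    funext fun e => edgeVector_eq_switch ie je m p L γ e] at hsurjY
  have hbound := card_add_choose_two_le_of_surjective_rigidityMap hsurjY (by simpa using hY)
  have hrange : Set.range h ⊆ gainVecLinear L '' gainSpaceOf d ie je m Y :=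
    Set.range_subset_iff.mpr fun e => Set.mem_image_of_mem _ (hγ e.1 e.2)
  have hh := (Submodule.finrank_mono (span_mono hrange)).trans
    (finrank_span_image_le_finrank (K := ℝ) (gainVecLinear L) (gainSpaceOf d ie je m Y))
  refine le_mul_sub_choose_add_sum_Icc
    (by simpa using Submodule.finrank_le (gainSpaceOf d ie je m Y)) hh ?_
  simpa [finrank_euclideanSpace_fin] using hbound

/-- Necessary count for minimal rigidity on the fixed torus: if `(⟨G,m⟩,p)` is
infinitesimally rigid with `|E| = d|V| - d`, then every subset of edges `Y` whose
incident vertex set `V(Y)` has `|V(Y)| ≥ d` satisfies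
`|Y| ≤ d|V(Y)| - (d+1 choose 2) + Σ_{i=1}^{k} (d - i)`, where `k` is the rank of the
gain space of `Y`. -/
theorem minimally_rigid_intermediate_count (d : ℕ) (hd : 1 ≤ d)
    (V E : Type*) [Fintype V] [Fintype E] [DecidableEq V] [DecidableEq E]
    (ie je : E → V) (m : E → Fin d → ℤ) (p : V → Fin d → ℝ)
    (L : Matrix (Fin d) (Fin d) ℝ) (hL : IsUnit L)
    (hrigid : ∀ u : V → Fin d → ℝ, IsMotion d ie je m p L u → ∀ v w : V, u v = u w)
    (hcount : Fintype.card E = d * Fintype.card V - d) :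
    ∀ Y : Finset E, d ≤ (Y.image ie ∪ Y.image je).card →
      (Y.card : ℤ) ≤ d * ((Y.image ie ∪ Y.image je).card : ℤ) - (d + 1).choose 2 +
        ∑ i ∈ Finset.Icc 1 (Module.finrank ℤ (gainSpaceOf d ie je m (↑Y : Set E))),
          ((d : ℤ) - (i : ℤ)) :=
  minimally_rigid_intermediate_count_general d V E ie je m p L hrigid hcount
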